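/- Let b ∈ ℂ and suppose there exist λ, μ, ν, τ ∈ ℂ with λτ − μν = 1 such that μ², τ², μτ ∈ ℤ and λ²b, ν²b, λνb ∈ ℤ. Then b ∈ ℤ. -/
import Mathlib


/-- If `λτ − μν = 1` and `μ², τ², μτ ∈ ℤ`, `λ²b, ν²b, λνb ∈ ℤ`, then `b ∈ ℤ`. -/
theorem stmt_3 (b lam mu nu tau : ℂ)
    (hdet : lam * tau - mu * nu = 1)
    (h1 : ∃ n : ℤ, mu ^ 2 = n) (h2 : ∃ n : ℤ, tau ^ 2 = n) (h3 : ∃ n : ℤ, mu * tau = n)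
    (h4 : ∃ n : ℤ, lam ^ 2 * b = n) (h5 : ∃ n : ℤ, nu ^ 2 * b = n)
    (h6 : ∃ n : ℤ, lam * nu * b = n) :
    ∃ n : ℤ, b = n := by
  obtain ⟨n1, e1⟩ := h1
  obtain ⟨n2, e2⟩ := h2
  obtain ⟨n3, e3⟩ := h3
  obtain ⟨n4, e4⟩ := h4
  obtain ⟨n5, e5⟩ := h5
  obtain ⟨n6, e6⟩ := h6
  refine ⟨n2 * n4 + n1 * n5 - 2 * n3 * n6, ?_⟩
  push_cast
  linear_combination (-b * (lam * tau - mu * nu + 1)) * hdet + n4 * e2 + n5 * e1 -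
    2 * n6 * e3 + (tau ^ 2 : ℂ) * e4 + (mu ^ 2 : ℂ) * e5 - 2 * (mu * tau : ℂ) * e6
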